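/- arXiv:2308.13757 — 2 statements merged into one kernel-verified Lean document; each statement's English description precedes it below -/
import Mathlib

section
/- Let f(z) = Σ_{n≥0} a_n z^n be analytic on the unit disk with |f(z)| ≤ 1 on the disk. Then for all z with |z| = r ≤ 1/3, one has |f(z)|² + Σ_{n≥1} |a_n| r^n + (1/(1+|a_0|) + r/(1-r)) Σ_{n≥1} |a_n|² r^{2n} ≤ 1. -/
/-!
Write `A = |a₀|` and `r = |z|`. Schwarz–Pick gives `|f(z)| ≤ (A + r)/(1 + A r)`, and Wiener's
inequality `|aₙ| ≤ 1 - A²` (`n ≥ 1`) bounds both series by geometric ones, so the left-hand side is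
at most `((A + r)/(1 + A r))² + (1 - A²) r/(1 - r) + (1/(1 + A) + r/(1 - r)) (1 - A²)² r²/(1 - r²)`.
Every term increases with `r`, and at `r = 1/3` the bound is `≤ 1` by a polynomial inequality in
`A ∈ [0, 1]`.
-/

open Metric Set ComplexConjugate

theorem monotoneOn_add_div_one_add_mul {a : ℝ} (ha0 : 0 ≤ a) (ha1 : a ≤ 1) :
    MonotoneOn (fun s => (a + s) / (1 + a * s)) (Ici 0) := by
  intro s hs t ht hst
  simp only [mem_Ici] at hs ht
  rw [div_le_div_iff₀ (by positivity) (by positivity)]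
  nlinarith [mul_nonneg (sub_nonneg.2 hst) (by nlinarith : 0 ≤ 1 - a ^ 2)]

theorem Metric.eball_one {α : Type*} [PseudoMetricSpace α] (x : α) : eball x 1 = ball x 1 := by
  rw [← ENNReal.coe_one, eball_coe, NNReal.coe_one]

section PowerSeries

variable {b : ℕ → ℂ} {g : ℂ → ℂ}

theorem hasFPowerSeriesOnBall_ofScalars_of_hasSum
    (hs : ∀ w ∈ ball (0 : ℂ) 1, HasSum (fun n => b n * w ^ n) (g w)) :
    HasFPowerSeriesOnBall g (FormalMultilinearSeries.ofScalars ℂ b) 0 1 where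
  r_le := by
    refine ENNReal.le_of_forall_nnreal_lt fun r hr => ?_
    refine FormalMultilinearSeries.le_radius_of_summable _ ?_
    have hr' : ((r : ℝ) : ℂ) ∈ ball (0 : ℂ) 1 := by simpa using hr
    simpa [FormalMultilinearSeries.ofScalars_norm] using (hs _ hr').summable.norm
  r_pos := one_pos
  hasSum {y} hy := by
    rw [eball_one] at hy
    simpa [FormalMultilinearSeries.ofScalars_apply_eq, mul_comm] using hs y hy

theorem differentiableOn_of_hasSum
    (hs : ∀ w ∈ ball (0 : ℂ) 1, HasSum (fun n => b n * w ^ n) (g w)) :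
    DifferentiableOn ℂ g (ball 0 1) := by
  simpa [eball_one] using (hasFPowerSeriesOnBall_ofScalars_of_hasSum hs).differentiableOn

theorem apply_zero_of_hasSum
    (hs : ∀ w ∈ ball (0 : ℂ) 1, HasSum (fun n => b n * w ^ n) (g w)) : g 0 = b 0 :=
  (hs 0 (mem_ball_self one_pos)).unique <| by
    simpa using hasSum_single (f := fun n => b n * (0 : ℂ) ^ n) 0 fun n hn => by simp [hn]

theorem deriv_zero_of_hasSum
    (hs : ∀ w ∈ ball (0 : ℂ) 1, HasSum (fun n => b n * w ^ n) (g w)) : deriv g 0 = b 1 := by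
  simp [(hasFPowerSeriesOnBall_ofScalars_of_hasSum hs).hasFPowerSeriesAt.deriv]

end PowerSeries

namespace Complex

/-- The involutive automorphism of the unit disc exchanging `c` and `0`. -/
noncomputable def mobius (c u : ℂ) : ℂ := (c - u) / (1 - conj c * u)

theorem sq_norm_one_sub_conj_mul_sub_sq_norm_sub (c u : ℂ) :
    ‖1 - conj c * u‖ ^ 2 - ‖c - u‖ ^ 2 = (1 - ‖c‖ ^ 2) * (1 - ‖u‖ ^ 2) := by
  simp only [Complex.sq_norm, normSq_apply, sub_re, sub_im, mul_re, mul_im, conj_re, conj_im,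
    one_re, one_im]
  ring

theorem one_sub_conj_mul_ne_zero {c u : ℂ} (hc : ‖c‖ < 1) (hu : ‖u‖ ≤ 1) :
    1 - conj c * u ≠ 0 := by
  refine sub_ne_zero.2 fun h => ?_
  have : ‖conj c * u‖ < 1 := by
    rw [norm_mul, norm_conj]
    nlinarith [norm_nonneg c, norm_nonneg u]
  simp [← h] at this

theorem mobius_self (c : ℂ) : mobius c c = 0 := by simp [mobius]

theorem mobius_mobius {c u : ℂ} (hc : ‖c‖ < 1) (hu : ‖u‖ ≤ 1) : mobius c (mobius c u) = u := by
  have hD := one_sub_conj_mul_ne_zero hc hu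
  have hc' : 1 - conj c * c ≠ 0 := one_sub_conj_mul_ne_zero hc hc.le
  have hnum : c - (c - u) / (1 - conj c * u) = u * (1 - conj c * c) / (1 - conj c * u) := by
    rw [eq_div_iff hD, sub_mul, div_mul_cancel₀ _ hD]
    ring
  have hden : 1 - conj c * ((c - u) / (1 - conj c * u)) = (1 - conj c * c) / (1 - conj c * u) := by
    rw [eq_div_iff hD, sub_mul, mul_assoc, div_mul_cancel₀ _ hD]
    ring
  rw [mobius, mobius, hnum, hden, div_div_div_cancel_right₀ hD, mul_div_cancel_right₀ _ hc']

theorem norm_mobius_lt_one {c u : ℂ} (hc : ‖c‖ < 1) (hu : ‖u‖ < 1) : ‖mobius c u‖ < 1 := by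
  have hD := one_sub_conj_mul_ne_zero hc hu.le
  rw [mobius, norm_div, div_lt_one (norm_pos_iff.2 hD), ← sq_lt_sq₀ (norm_nonneg _) (norm_nonneg _),
    ← sub_pos, sq_norm_one_sub_conj_mul_sub_sq_norm_sub]
  have := norm_nonneg c; have := norm_nonneg u
  apply mul_pos <;> nlinarith

theorem norm_mobius_le {c u : ℂ} (hc : ‖c‖ < 1) (hu : ‖u‖ < 1) :
    ‖mobius c u‖ ≤ (‖c‖ + ‖u‖) / (1 + ‖c‖ * ‖u‖) := by
  have hD := norm_pos_iff.2 (one_sub_conj_mul_ne_zero hc hu.le)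
  have hD' : ‖1 - conj c * u‖ ≤ 1 + ‖c‖ * ‖u‖ := by
    simpa using norm_sub_le (1 : ℂ) (conj c * u)
  have key := sq_norm_one_sub_conj_mul_sub_sq_norm_sub c u
  have := norm_nonneg c; have := norm_nonneg u
  have hP : 0 ≤ (1 - ‖c‖ ^ 2) * (1 - ‖u‖ ^ 2) := mul_nonneg (by nlinarith) (by nlinarith)
  have hsq : ‖1 - conj c * u‖ ^ 2 ≤ (1 + ‖c‖ * ‖u‖) ^ 2 := by gcongr
  rw [mobius, norm_div, div_le_div_iff₀ hD (by positivity),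
    ← pow_le_pow_iff_left₀ (by positivity) (by positivity) two_ne_zero]
  linear_combination -(1 + ‖c‖ * ‖u‖) ^ 2 * key + mul_le_mul_of_nonneg_left hsq hP

theorem hasDerivAt_mobius_self {c : ℂ} (hc : ‖c‖ < 1) :
    HasDerivAt (mobius c) (-((1 - ‖c‖ ^ 2 : ℝ) : ℂ)⁻¹) c := by
  have hc' : 1 - conj c * c ≠ 0 := one_sub_conj_mul_ne_zero hc hc.le
  refine (((hasDerivAt_id c).const_sub c).div
    (((hasDerivAt_id c).const_mul (conj c)).const_sub 1) hc').congr_deriv ?_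
  simp only [id, conj_mul', sub_self, zero_mul, sub_zero] at hc' ⊢
  push_cast
  field_simp

theorem differentiableOn_mobius {c : ℂ} (hc : ‖c‖ < 1) :
    DifferentiableOn ℂ (mobius c) (ball 0 1) :=
  DifferentiableOn.div (by fun_prop) (by fun_prop) fun _ hu =>
    one_sub_conj_mul_ne_zero hc (mem_ball_zero_iff.1 hu).le

theorem mapsTo_mobius {c : ℂ} (hc : ‖c‖ < 1) : MapsTo (mobius c) (ball 0 1) (ball 0 1) :=
  fun _ hu => mem_ball_zero_iff.2 (norm_mobius_lt_one hc (mem_ball_zero_iff.1 hu))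

theorem mapsTo_ball_or_eqOn_const {g : ℂ → ℂ} (hd : DifferentiableOn ℂ g (ball 0 1))
    (hg : MapsTo g (ball 0 1) (closedBall 0 1)) :
    MapsTo g (ball 0 1) (ball 0 1) ∨ EqOn g (Function.const ℂ (g 0)) (ball 0 1) := by
  by_cases h : ∃ w ∈ ball (0 : ℂ) 1, ‖g w‖ = 1
  · obtain ⟨w, hw, hw1⟩ := h
    have hmax : IsMaxOn (norm ∘ g) (ball 0 1) w := fun v hv =>
      (mem_closedBall_zero_iff.1 (hg hv)).trans hw1.ge
    have hconst := eqOn_of_isPreconnected_of_isMaxOn_norm (convex_ball (0 : ℂ) 1).isPreconnected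
      isOpen_ball hd hw hmax
    right
    exact fun v hv => (hconst hv).trans (hconst (mem_ball_self one_pos)).symm
  · push Not at h
    exact .inl fun v hv => mem_ball_zero_iff.2 <|
      (mem_closedBall_zero_iff.1 (hg hv)).lt_of_ne (h v hv)

/-- Composing with the automorphism `mobius (g 0)` reduces to the Schwarz lemma. -/
theorem schwarzPick_norm_apply_le_of_mapsTo_ball {g : ℂ → ℂ} {w : ℂ}
    (hd : DifferentiableOn ℂ g (ball 0 1)) (hg : MapsTo g (ball 0 1) (ball 0 1)) (hw : ‖w‖ < 1) :
    ‖g w‖ ≤ (‖g 0‖ + ‖w‖) / (1 + ‖g 0‖ * ‖w‖) := by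
  set c := g 0
  have hc : ‖c‖ < 1 := mem_ball_zero_iff.1 (hg (mem_ball_self one_pos))
  have hgw : ‖g w‖ < 1 := mem_ball_zero_iff.1 (hg (mem_ball_zero_iff.2 hw))
  have hφ : ‖mobius c (g w)‖ ≤ ‖w‖ :=
    norm_le_norm_of_mapsTo_ball (f := mobius c ∘ g) ((differentiableOn_mobius hc).comp hd hg)
      (((mapsTo_mobius hc).comp hg).mono_right ball_subset_closedBall) (mobius_self c) hw
  calc ‖g w‖ = ‖mobius c (mobius c (g w))‖ := by rw [mobius_mobius hc hgw.le]
    _ ≤ (‖c‖ + ‖mobius c (g w)‖) / (1 + ‖c‖ * ‖mobius c (g w)‖) :=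
      norm_mobius_le hc (norm_mobius_lt_one hc hgw)
    _ ≤ (‖c‖ + ‖w‖) / (1 + ‖c‖ * ‖w‖) :=
      monotoneOn_add_div_one_add_mul (norm_nonneg c) hc.le (norm_nonneg _) (norm_nonneg w) hφ

theorem schwarzPick_norm_deriv_le_of_mapsTo_ball {g : ℂ → ℂ}
    (hd : DifferentiableOn ℂ g (ball 0 1)) (hg : MapsTo g (ball 0 1) (ball 0 1)) :
    ‖deriv g 0‖ ≤ 1 - ‖g 0‖ ^ 2 := by
  set c := g 0
  have hc : ‖c‖ < 1 := mem_ball_zero_iff.1 (hg (mem_ball_self one_pos))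
  have hpos : 0 < 1 - ‖c‖ ^ 2 := by nlinarith [norm_nonneg c]
  have hderiv : HasDerivAt (mobius c ∘ g) (-((1 - ‖c‖ ^ 2 : ℝ) : ℂ)⁻¹ * deriv g 0) 0 :=
    (hasDerivAt_mobius_self hc).comp 0 (hd.differentiableAt (ball_mem_nhds 0 one_pos)).hasDerivAt
  have hmaps : MapsTo (mobius c ∘ g) (ball 0 1) (closedBall ((mobius c ∘ g) 0) 1) := by
    rw [Function.comp_apply, mobius_self]
    exact ((mapsTo_mobius hc).comp hg).mono_right ball_subset_closedBall
  have hschwarz :=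
    norm_deriv_le_one_of_mapsTo_ball ((differentiableOn_mobius hc).comp hd hg) hmaps one_pos
  rw [hderiv.deriv, norm_mul, norm_neg, norm_inv, norm_real, Real.norm_of_nonneg hpos.le,
    inv_mul_le_iff₀ hpos, mul_one] at hschwarz
  exact hschwarz

theorem schwarzPick_norm_apply_le {g : ℂ → ℂ} {w : ℂ} (hd : DifferentiableOn ℂ g (ball 0 1))
    (hg : MapsTo g (ball 0 1) (closedBall 0 1)) (hw : ‖w‖ < 1) :
    ‖g w‖ ≤ (‖g 0‖ + ‖w‖) / (1 + ‖g 0‖ * ‖w‖) := by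
  rcases mapsTo_ball_or_eqOn_const hd hg with hg' | hconst
  · exact schwarzPick_norm_apply_le_of_mapsTo_ball hd hg' hw
  · have h0 := mem_closedBall_zero_iff.1 (hg (mem_ball_self one_pos))
    rw [hconst (mem_ball_zero_iff.2 hw), Function.const_apply]
    simpa using monotoneOn_add_div_one_add_mul (norm_nonneg _) h0 (mem_Ici.2 le_rfl)
      (norm_nonneg w) (norm_nonneg w)

theorem schwarzPick_norm_deriv_le {g : ℂ → ℂ} (hd : DifferentiableOn ℂ g (ball 0 1))
    (hg : MapsTo g (ball 0 1) (closedBall 0 1)) : ‖deriv g 0‖ ≤ 1 - ‖g 0‖ ^ 2 := by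
  rcases mapsTo_ball_or_eqOn_const hd hg with hg' | hconst
  · exact schwarzPick_norm_deriv_le_of_mapsTo_ball hd hg'
  · have h0 := mem_closedBall_zero_iff.1 (hg (mem_ball_self one_pos))
    rw [(hconst.eventuallyEq_of_mem (ball_mem_nhds 0 one_pos)).deriv_eq]
    show ‖deriv (fun _ => g 0) 0‖ ≤ _
    rw [deriv_const, norm_zero, sub_nonneg]
    exact pow_le_one₀ (norm_nonneg _) h0

end Complex

theorem IsPrimitiveRoot.sum_pow_pow_eq_ite {R : Type*} [CommRing R] [IsDomain R] {ζ : R} {n : ℕ}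
    (hζ : IsPrimitiveRoot ζ n) (m : ℕ) :
    ∑ j ∈ Finset.range n, (ζ ^ m) ^ j = if n ∣ m then (n : R) else 0 := by
  split_ifs with h
  · simp [(hζ.pow_eq_one_iff_dvd m).2 h]
  · have hne : ζ ^ m - 1 ≠ 0 := sub_ne_zero.2 fun h1 => h ((hζ.pow_eq_one_iff_dvd m).1 h1)
    refine (mul_eq_zero.1 ?_).resolve_right hne
    rw [geom_sum_mul, ← pow_mul, mul_comm, pow_mul, hζ.pow_eq_one, one_pow, sub_self]

section Wiener

variable {b : ℕ → ℂ} {g : ℂ → ℂ}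

theorem hasSum_sum_rotations (hs : ∀ w ∈ ball (0 : ℂ) 1, HasSum (fun n => b n * w ^ n) (g w))
    {ζ : ℂ} {n : ℕ} (hζ : IsPrimitiveRoot ζ n) (hn : 0 < n) {z : ℂ} (hz : ‖z‖ < 1) :
    HasSum (fun k => n * (b (n * k) * (z ^ n) ^ k)) (∑ j ∈ Finset.range n, g (ζ ^ j * z)) := by
  have htot : HasSum (fun m => ∑ j ∈ Finset.range n, b m * (ζ ^ j * z) ^ m)
      (∑ j ∈ Finset.range n, g (ζ ^ j * z)) :=
    hasSum_sum fun j _ => hs _ <| by simpa [hζ.norm'_eq_one hn.ne'] using hz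
  have hterm (m : ℕ) : ∑ j ∈ Finset.range n, b m * (ζ ^ j * z) ^ m
      = if n ∣ m then n * (b m * z ^ m) else 0 := by
    simp_rw [mul_pow, ← pow_mul, mul_comm _ m, pow_mul, mul_comm _ (z ^ m), ← mul_assoc,
      ← Finset.mul_sum, hζ.sum_pow_pow_eq_ite]
    split_ifs <;> ring
  rw [funext hterm] at htot
  have hrange : ∀ m ∉ range (n * ·), (if n ∣ m then n * (b m * z ^ m) else 0) = 0 :=
    fun m hm => if_neg fun ⟨k, hk⟩ => hm ⟨k, hk.symm⟩
  convert ((mul_right_injective₀ hn.ne').hasSum_iff hrange).2 htot using 1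
  ext k
  simp [pow_mul]

theorem exists_hasSum_coeff_mul_norm_le_one
    (hs : ∀ w ∈ ball (0 : ℂ) 1, HasSum (fun n => b n * w ^ n) (g w))
    (hbd : ∀ w ∈ ball (0 : ℂ) 1, ‖g w‖ ≤ 1) {n : ℕ} (hn : 0 < n) {w : ℂ} (hw : ‖w‖ < 1) :
    ∃ v, HasSum (fun k => b (n * k) * w ^ k) v ∧ ‖v‖ ≤ 1 := by
  obtain ⟨z, rfl⟩ := IsAlgClosed.exists_pow_nat_eq w hn
  have hz : ‖z‖ < 1 := by rwa [norm_pow, pow_lt_one_iff_of_nonneg (norm_nonneg z) hn.ne'] at hw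
  have hζ := Complex.isPrimitiveRoot_exp n hn.ne'
  set ζ := Complex.exp (2 * Real.pi * Complex.I / n)
  have hn' : (n : ℂ) ≠ 0 := Nat.cast_ne_zero.2 hn.ne'
  refine ⟨(n : ℂ)⁻¹ * ∑ j ∈ Finset.range n, g (ζ ^ j * z), ?_, ?_⟩
  · simpa [← mul_assoc, inv_mul_cancel₀ hn'] using
      (hasSum_sum_rotations hs hζ hn hz).mul_left (n : ℂ)⁻¹
  · rw [norm_mul, norm_inv, Complex.norm_natCast, inv_mul_le_iff₀ (by positivity), mul_one]
    calc ‖∑ j ∈ Finset.range n, g (ζ ^ j * z)‖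
        ≤ ∑ j ∈ Finset.range n, ‖g (ζ ^ j * z)‖ := norm_sum_le _ _
      _ ≤ ∑ _j ∈ Finset.range n, (1 : ℝ) := Finset.sum_le_sum fun j _ =>
          hbd _ <| by simpa [hζ.norm'_eq_one hn.ne'] using hz
      _ = n := by simp

/-- Wiener's inequality: Schwarz–Pick applied to `w ↦ ∑ₖ b (n * k) * w ^ k`, which is bounded by
`1` as an average of rotations of `g`. -/
theorem norm_coeff_le_one_sub_sq (hs : ∀ w ∈ ball (0 : ℂ) 1, HasSum (fun n => b n * w ^ n) (g w))
    (hbd : ∀ w ∈ ball (0 : ℂ) 1, ‖g w‖ ≤ 1) {n : ℕ} (hn : 0 < n) : ‖b n‖ ≤ 1 - ‖b 0‖ ^ 2 := by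
  choose! H hH hH1 using fun w (hw : w ∈ ball (0 : ℂ) 1) =>
    exists_hasSum_coeff_mul_norm_le_one hs hbd hn (mem_ball_zero_iff.1 hw)
  have := Complex.schwarzPick_norm_deriv_le (differentiableOn_of_hasSum hH)
    fun w hw => mem_closedBall_zero_iff.2 (hH1 w hw)
  rwa [deriv_zero_of_hasSum hH, apply_zero_of_hasSum hH, mul_one, mul_zero] at this

end Wiener

theorem tsum_mul_pow_succ_le {x : ℕ → ℝ} {M q : ℝ} (hx0 : ∀ n, 0 ≤ x n) (hxM : ∀ n, x n ≤ M)
    (hq0 : 0 ≤ q) (hq1 : q < 1) : ∑' n, x n * q ^ (n + 1) ≤ M * (q / (1 - q)) := by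
  have hgeom : HasSum (fun n => M * q ^ (n + 1)) (M * (q / (1 - q))) := by
    have h := (hasSum_geometric_of_lt_one hq0 hq1).mul_left (M * q)
    rw [show M * q * (1 - q)⁻¹ = M * (q / (1 - q)) by ring] at h
    simpa only [pow_succ', mul_assoc] using h
  have hle (n : ℕ) : x n * q ^ (n + 1) ≤ M * q ^ (n + 1) :=
    mul_le_mul_of_nonneg_right (hxM n) (by positivity)
  exact hasSum_le hle
    (hgeom.summable.of_nonneg_of_le (fun n => mul_nonneg (hx0 n) (by positivity)) hle).hasSum hgeom

theorem bohrRogosinski_majorant_le_one {A r : ℝ} (hA0 : 0 ≤ A) (hA1 : A ≤ 1) (hr0 : 0 ≤ r)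
    (hr : r ≤ 1 / 3) :
    ((A + r) / (1 + A * r)) ^ 2 + (1 - A ^ 2) * (r / (1 - r))
      + (1 / (1 + A) + r / (1 - r)) * ((1 - A ^ 2) ^ 2 * (r ^ 2 / (1 - r ^ 2))) ≤ 1 := by
  have hA2 : 0 ≤ 1 - A ^ 2 := by nlinarith
  have hval : (A + r) / (1 + A * r) ≤ (3 * A + 1) / (A + 3) := by
    refine (monotoneOn_add_div_one_add_mul hA0 hA1 hr0
      (by norm_num : (0 : ℝ) ≤ 1 / 3) hr).trans_eq ?_
    field_simp
    ring
  have h1 : r / (1 - r) ≤ 1 / 2 := by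
    rw [div_le_div_iff₀ (by linarith) two_pos]
    linarith
  have h2 : r ^ 2 / (1 - r ^ 2) ≤ 1 / 8 := by
    rw [div_le_div_iff₀ (by nlinarith) (by norm_num)]
    nlinarith
  have hkey : ((3 * A + 1) / (A + 3)) ^ 2 + (1 - A ^ 2) * (1 / 2)
      + (1 / (1 + A) + 1 / 2) * ((1 - A ^ 2) ^ 2 * (1 / 8)) ≤ 1 := by
    have e : (1 / (1 + A) + 1 / 2) * ((1 - A ^ 2) ^ 2 * (1 / 8))
        = (3 + A) * (1 - A) ^ 2 * (1 + A) / 16 := by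
      field_simp
      ring
    rw [e, div_pow, add_assoc, ← le_sub_iff_add_le, div_le_iff₀ (by positivity)]
    nlinarith [mul_nonneg (mul_nonneg (mul_nonneg (sub_nonneg.2 hA1) (by linarith : 0 ≤ 1 + A))
      (sq_nonneg (1 - A))) (by positivity : 0 ≤ A ^ 2 + 10 * A + 29)]
  calc _ ≤ ((3 * A + 1) / (A + 3)) ^ 2 + (1 - A ^ 2) * (1 / 2)
        + (1 / (1 + A) + 1 / 2) * ((1 - A ^ 2) ^ 2 * (1 / 8)) := by
        gcongr ?_ ^ 2 + _ * ?_ + (_ + ?_) * (_ * ?_)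
        exact mul_nonneg (sq_nonneg _) (div_nonneg (sq_nonneg r) (by nlinarith))
    _ ≤ 1 := hkey

theorem bohr_rogosinski_refined_square
    (f : ℂ → ℂ) (a : ℕ → ℂ)
    (hf : ∀ z ∈ Metric.ball (0:ℂ) 1, HasSum (fun n => a n * z ^ n) (f z))
    (hb : ∀ z ∈ Metric.ball (0:ℂ) 1, ‖f z‖ ≤ 1)
    (z : ℂ) (hz : ‖z‖ ≤ 1 / 3) :
    ‖f z‖ ^ 2
      + ∑' n : ℕ, ‖a (n+1)‖ * ‖z‖ ^ (n+1)
      + (1 / (1 + ‖a 0‖) + ‖z‖ / (1 - ‖z‖))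
          * ∑' n : ℕ, ‖a (n+1)‖ ^ 2 * ‖z‖ ^ (2*(n+1)) ≤ 1 := by
  have hz1 : ‖z‖ < 1 := hz.trans_lt (by norm_num)
  have hf0 := apply_zero_of_hasSum hf
  have ha0 : ‖a 0‖ ≤ 1 := hf0 ▸ hb 0 (mem_ball_self one_pos)
  have hval : ‖f z‖ ≤ (‖a 0‖ + ‖z‖) / (1 + ‖a 0‖ * ‖z‖) :=
    hf0 ▸ Complex.schwarzPick_norm_apply_le (differentiableOn_of_hasSum hf)
      (fun w hw => mem_closedBall_zero_iff.2 (hb w hw)) hz1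
  have hwiener (n : ℕ) : ‖a (n + 1)‖ ≤ 1 - ‖a 0‖ ^ 2 := norm_coeff_le_one_sub_sq hf hb n.succ_pos
  have hS1 := tsum_mul_pow_succ_le (fun n => norm_nonneg _) hwiener (norm_nonneg z) hz1
  have hS2 : ∑' n : ℕ, ‖a (n+1)‖ ^ 2 * ‖z‖ ^ (2*(n+1))
      ≤ (1 - ‖a 0‖ ^ 2) ^ 2 * (‖z‖ ^ 2 / (1 - ‖z‖ ^ 2)) := by
    simp_rw [pow_mul]
    exact tsum_mul_pow_succ_le (fun n => sq_nonneg _)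
      (fun n => pow_le_pow_left₀ (norm_nonneg _) (hwiener n) 2) (sq_nonneg _)
      (pow_lt_one₀ (norm_nonneg z) hz1 two_ne_zero)
  calc _ ≤ ((‖a 0‖ + ‖z‖) / (1 + ‖a 0‖ * ‖z‖)) ^ 2 + (1 - ‖a 0‖ ^ 2) * (‖z‖ / (1 - ‖z‖))
        + (1 / (1 + ‖a 0‖) + ‖z‖ / (1 - ‖z‖))
          * ((1 - ‖a 0‖ ^ 2) ^ 2 * (‖z‖ ^ 2 / (1 - ‖z‖ ^ 2))) := by
        gcongr
    _ ≤ 1 := bohrRogosinski_majorant_le_one (norm_nonneg _) ha0 (norm_nonneg z) hz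
end

section
/- Let f(z) = Σ_{n≥0} a_n z^n be analytic on the unit disk with |f(z)| ≤ 1, and suppose a = |a_0| ≤ 0.402964. Then for |z| = r ≤ 1/3, a + Σ_{n≥1} |a_n| r^n + (1/(1+a) + r/(1-r)) Σ_{n≥1} |a_n|² r^{2n} + (8/9) Σ_{n≥1} n |a_n|² r^{2n} ≤ 1, and the constants 1/3 and 8/9 are best possible. -/
/-!
By Bessel's inequality for `t ↦ f (ρ e^{it})` on the circles of radius `ρ < 1`,
and letting `ρ → 1`, the coefficients satisfy `|a₀|² + ∑_{n ≥ 1} |aₙ|² ≤ 1`. For `r ≤ 1/3`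
both quadratic sums are then at most `r² ∑ |aₙ|² ≤ (1 - |a₀|²) / 9`, because `n r^{2n} ≤ r²`,
while AM-GM against the geometric series `∑ r^{2n} ≤ 1/8` bounds the linear sum; what remains
is a quadratic inequality in `|a₀|`.

Sharpness is witnessed by the Möbius maps `(p - z) / (1 - p z)`, whose sums are geometric.
For `r > 1/3`, `p = (1 + r) / (4 r)` already pushes the first two terms above `1`. At `r = 1/3`
the excess over `1` is `(1 - p)² (18 λ (1 + p)² - (9 - p²)²) / (2 (9 - p²)²)`, positive for
`p` close to `1` exactly when `λ > 8/9`.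
-/

open Finset Metric Filter Topology

noncomputable def bohrSum (lam : ℝ) (a : ℕ → ℂ) (r : ℝ) : ℝ :=
  ‖a 0‖
    + (∑' n : ℕ, ‖a (n+1)‖ * r ^ (n+1))
    + (1 / (1 + ‖a 0‖) + r / (1 - r)) * (∑' n : ℕ, ‖a (n+1)‖ ^ 2 * r ^ (2*(n+1)))
    + lam * (∑' n : ℕ, ((n:ℝ)+1) * ‖a (n+1)‖ ^ 2 * r ^ (2*(n+1)))

theorem Orthonormal.sum_norm_sq_le_of_hasSum {𝕜 E ι : Type*} [RCLike 𝕜] [NormedAddCommGroup E]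
    [InnerProductSpace 𝕜 E] {v : ι → E} (hv : Orthonormal 𝕜 v) {c : ι → 𝕜} {x : E}
    (hx : HasSum (fun i => c i • v i) x) (s : Finset ι) :
    ∑ i ∈ s, ‖c i‖ ^ 2 ≤ ‖x‖ ^ 2 := by
  classical
  have hcoeff (i : ι) : inner 𝕜 (v i) x = c i := by
    refine ((innerSL 𝕜 (v i)).hasSum hx).unique ?_
    convert hasSum_ite_eq i (c i) using 2 with j
    rw [innerSL_apply_apply, inner_smul_right, orthonormal_iff_ite.mp hv]
    split_ifs <;> simp_all
  simpa only [hcoeff] using hv.sum_inner_products_le x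

open AddCircle MeasureTheory in
theorem sum_range_norm_sq_le_of_hasSum_fourier {T : ℝ} [Fact (0 < T)] {c : ℕ → ℂ}
    {g : C(AddCircle T, ℂ)} (hg : HasSum (fun n : ℕ => c n • fourier (n : ℤ)) g) (N : ℕ) :
    ∑ n ∈ range N, ‖c n‖ ^ 2 ≤ ‖g‖ ^ 2 := by
  have hL2 : HasSum (fun n : ℕ => c n • fourierLp 2 (n : ℤ))
      (ContinuousMap.toLp 2 haarAddCircle ℂ g) := by
    simpa only [map_smul] using (ContinuousMap.toLp 2 haarAddCircle ℂ).hasSum hg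
  have hnorm : ‖ContinuousMap.toLp (E := ℂ) 2 haarAddCircle ℂ g‖ ≤ ‖g‖ := by
    refine ((ContinuousMap.toLp 2 haarAddCircle ℂ).le_opNorm g).trans ?_
    have := ContinuousMap.toLp_norm_le (E := ℂ) (p := 2) (haarAddCircle (T := T)) (𝕜 := ℂ)
    simp only [measureUnivNNReal, measure_univ, ENNReal.toNNReal_one, Real.one_rpow,
      NNReal.coe_one] at this
    exact mul_le_of_le_one_left (norm_nonneg g) this
  calc ∑ n ∈ range N, ‖c n‖ ^ 2
      ≤ ‖ContinuousMap.toLp (E := ℂ) 2 haarAddCircle ℂ g‖ ^ 2 :=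
        (orthonormal_fourier.comp _ Nat.cast_injective).sum_norm_sq_le_of_hasSum hL2 _
    _ ≤ ‖g‖ ^ 2 := by gcongr

theorem summable_norm_mul_pow_of_summable {𝕜 : Type*} [NormedField 𝕜] {a : ℕ → 𝕜} {w : 𝕜}
    (hw : Summable fun n => a n * w ^ n) {ρ : ℝ} (hρ0 : 0 ≤ ρ) (hρ : ρ < ‖w‖) :
    Summable fun n => ‖a n‖ * ρ ^ n := by
  have hw0 : 0 < ‖w‖ := hρ0.trans_lt hρ
  obtain ⟨C, hC⟩ := hw.tendsto_atTop_zero.norm.bddAbove_range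
  refine .of_nonneg_of_le (fun n => by positivity) (fun n => ?_)
    ((summable_geometric_of_lt_one (by positivity) ((div_lt_one hw0).2 hρ)).mul_left C)
  calc ‖a n‖ * ρ ^ n = ‖a n * w ^ n‖ * (ρ / ‖w‖) ^ n := by
        rw [norm_mul, norm_pow, div_pow, mul_assoc, mul_div_cancel₀ _ (by positivity)]
    _ ≤ C * (ρ / ‖w‖) ^ n := by gcongr; exact hC ⟨n, rfl⟩

theorem sum_range_sq_norm_mul_pow_le_one {f : ℂ → ℂ} {a : ℕ → ℂ}
    (hs : ∀ z ∈ ball (0 : ℂ) 1, HasSum (fun n => a n * z ^ n) (f z))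
    (hb : ∀ z ∈ ball (0 : ℂ) 1, ‖f z‖ ≤ 1) {ρ : ℝ} (hρ0 : 0 ≤ ρ) (hρ1 : ρ < 1) (N : ℕ) :
    ∑ n ∈ range N, (‖a n‖ * ρ ^ n) ^ 2 ≤ 1 := by
  have hnorm (n : ℕ) : ‖(a n * ρ ^ n) • fourier (T := 1) (n : ℤ)‖ = ‖a n‖ * ρ ^ n := by
    rw [norm_smul, fourier_norm, mul_one, norm_mul, norm_pow, Complex.norm_real,
      Real.norm_of_nonneg hρ0]
  have hsum : Summable fun n => ‖a n‖ * ρ ^ n := by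
    have hσ : ‖(((1 + ρ) / 2 : ℝ) : ℂ)‖ = (1 + ρ) / 2 := Complex.norm_of_nonneg (by positivity)
    refine summable_norm_mul_pow_of_summable (hs _ ?_).summable hρ0 (by rw [hσ]; linarith)
    rw [mem_ball_zero_iff, hσ]
    linarith
  obtain ⟨g, hg⟩ : Summable fun n : ℕ => (a n * ρ ^ n) • fourier (T := 1) (n : ℤ) :=
    .of_norm (by simpa only [hnorm] using hsum)
  have hg1 : ‖g‖ ≤ 1 := by
    refine (ContinuousMap.norm_le g zero_le_one).2 fun x => ?_
    have hz : (ρ * AddCircle.toCircle x : ℂ) ∈ ball (0 : ℂ) 1 := by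
      rwa [mem_ball_zero_iff, norm_mul, Circle.norm_coe, mul_one, Complex.norm_real,
        Real.norm_of_nonneg hρ0]
    have hgx : HasSum (fun n => a n * (ρ * AddCircle.toCircle x : ℂ) ^ n) (g x) := by
      have h := (ContinuousMap.evalCLM ℂ x).hasSum hg
      rw [ContinuousMap.evalCLM_apply] at h
      convert h using 2 with n
      rw [ContinuousMap.evalCLM_apply, ContinuousMap.smul_apply, fourier_apply, natCast_zsmul,
        AddCircle.toCircle_nsmul, Circle.coe_pow, smul_eq_mul, mul_pow, mul_assoc]
    exact (hs _ hz).unique hgx ▸ hb _ hz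
  calc ∑ n ∈ range N, (‖a n‖ * ρ ^ n) ^ 2 = ∑ n ∈ range N, ‖a n * ρ ^ n‖ ^ 2 := by
        simp only [norm_mul, norm_pow, Complex.norm_real, Real.norm_of_nonneg hρ0]
    _ ≤ ‖g‖ ^ 2 := sum_range_norm_sq_le_of_hasSum_fourier hg N
    _ ≤ 1 := by nlinarith [norm_nonneg g]

theorem sum_range_norm_sq_le_one {f : ℂ → ℂ} {a : ℕ → ℂ}
    (hs : ∀ z ∈ ball (0 : ℂ) 1, HasSum (fun n => a n * z ^ n) (f z))
    (hb : ∀ z ∈ ball (0 : ℂ) 1, ‖f z‖ ≤ 1) (N : ℕ) :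
    ∑ n ∈ range N, ‖a n‖ ^ 2 ≤ 1 := by
  have hclosed : IsClosed {ρ : ℝ | ∑ n ∈ range N, (‖a n‖ * ρ ^ n) ^ 2 ≤ 1} :=
    isClosed_le (by fun_prop) continuous_const
  have hIco : Set.Ico (0 : ℝ) 1 ⊆ {ρ | ∑ n ∈ range N, (‖a n‖ * ρ ^ n) ^ 2 ≤ 1} :=
    fun ρ hρ => sum_range_sq_norm_mul_pow_le_one hs hb hρ.1 hρ.2 N
  have h1 : (1 : ℝ) ∈ closure (Set.Ico 0 1) := by
    rw [closure_Ico zero_ne_one]; exact ⟨zero_le_one, le_rfl⟩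
  simpa using hclosed.closure_subset_iff.2 hIco h1

theorem succ_mul_pow_succ_le {x : ℝ} (hx0 : 0 ≤ x) (hx : x ≤ 1 / 2) (n : ℕ) :
    ((n : ℝ) + 1) * x ^ (n + 1) ≤ x := by
  have h2n : (n : ℝ) + 1 ≤ 2 ^ n := by exact_mod_cast Nat.lt_two_pow_self
  calc ((n : ℝ) + 1) * x ^ (n + 1) ≤ 2 ^ n * (1 / 2) ^ n * x := by
        rw [pow_succ, ← mul_assoc]; gcongr
    _ = x := by rw [← mul_pow]; norm_num

theorem tsum_le_mul_tsum_of_le {f g : ℕ → ℝ} {C : ℝ} (hf : ∀ n, 0 ≤ f n)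
    (hfg : ∀ n, f n ≤ C * g n) (hg : Summable g) : ∑' n, f n ≤ C * ∑' n, g n := by
  rw [← tsum_mul_left]
  exact (hg.mul_left C).of_nonneg_of_le hf hfg |>.tsum_le_tsum hfg (hg.mul_left C)

theorem tsum_mul_pow_succ_le_s15 {b : ℕ → ℝ} (hb : ∀ n, 0 ≤ b n) (hb2 : Summable fun n => b n ^ 2)
    {r c : ℝ} (hr0 : 0 ≤ r) (hr1 : r < 1) (hc : 0 < c) :
    ∑' n, b n * r ^ (n + 1) ≤ c / 2 * ∑' n, b n ^ 2 + r ^ 2 / (1 - r ^ 2) / (2 * c) := by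
  have hgeo : HasSum (fun n : ℕ => r ^ (2 * (n + 1))) (r ^ 2 / (1 - r ^ 2)) := by
    have h := (hasSum_geometric_of_lt_one (sq_nonneg r) (by nlinarith)).mul_left (r ^ 2)
    simpa only [pow_mul, pow_succ' (r ^ 2), div_eq_mul_inv] using h
  have hamgm (n : ℕ) : b n * r ^ (n + 1) ≤ c / 2 * b n ^ 2 + r ^ (2 * (n + 1)) / (2 * c) := by
    have key : c / 2 * b n ^ 2 + r ^ (2 * (n + 1)) / (2 * c) - b n * r ^ (n + 1)
        = (c * b n - r ^ (n + 1)) ^ 2 / (2 * c) := by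
      rw [pow_mul']; field_simp; ring
    nlinarith [div_nonneg (sq_nonneg (c * b n - r ^ (n + 1))) (by positivity : (0:ℝ) ≤ 2 * c)]
  have hbound := (hb2.hasSum.mul_left (c / 2)).add (hgeo.div_const (2 * c))
  refine hasSum_le hamgm (Summable.of_nonneg_of_le (fun n => ?_) hamgm hbound.summable).hasSum
    hbound
  exact mul_nonneg (hb n) (pow_nonneg hr0 _)

theorem bohrSum_le_one {a : ℕ → ℂ} (hsum : Summable fun n => ‖a (n + 1)‖ ^ 2)
    (hle : ‖a 0‖ ^ 2 + ∑' n, ‖a (n + 1)‖ ^ 2 ≤ 1) (ha : ‖a 0‖ ≤ 0.402964) {r : ℝ}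
    (hr0 : 0 ≤ r) (hr : r ≤ 1 / 3) : bohrSum (8 / 9) a r ≤ 1 := by
  set α := ‖a 0‖
  set S := ∑' n, ‖a (n + 1)‖ ^ 2
  have hα0 : 0 ≤ α := norm_nonneg _
  have hS0 : 0 ≤ S := tsum_nonneg fun n => sq_nonneg _
  have hr2 : r ^ 2 ≤ 1 / 9 := by nlinarith
  have h1 : ∑' n, ‖a (n + 1)‖ * r ^ (n + 1) ≤ 39 / 200 * S + 25 / 156 := by
    have h := tsum_mul_pow_succ_le_s15 (fun n => norm_nonneg _) hsum hr0 (by linarith)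
      (c := 39 / 100) (by norm_num)
    have hgeo : r ^ 2 / (1 - r ^ 2) ≤ 1 / 8 := by
      rw [div_le_iff₀ (by nlinarith)]; nlinarith
    linarith [div_le_div_of_nonneg_right hgeo (by norm_num : (0:ℝ) ≤ 2 * (39 / 100))]
  have h2 : ∑' n, ‖a (n + 1)‖ ^ 2 * r ^ (2 * (n + 1)) ≤ r ^ 2 * S := by
    refine tsum_le_mul_tsum_of_le (fun n => by positivity) (fun n => ?_) hsum
    rw [mul_comm (r ^ 2)]
    exact mul_le_mul_of_nonneg_left
      (pow_le_pow_of_le_one hr0 (by linarith) (by omega : 2 ≤ 2 * (n + 1))) (sq_nonneg _)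
  have h3 : ∑' n : ℕ, ((n:ℝ)+1) * ‖a (n + 1)‖ ^ 2 * r ^ (2 * (n + 1)) ≤ r ^ 2 * S := by
    refine tsum_le_mul_tsum_of_le (fun n => by positivity) (fun n => ?_) hsum
    have := succ_mul_pow_succ_le (sq_nonneg r) (by linarith) n
    rw [pow_mul]
    nlinarith [sq_nonneg ‖a (n + 1)‖]
  have hcoef : r / (1 - r) ≤ 1 / 2 := by rw [div_le_iff₀ (by linarith)]; linarith
  have hr2S : r ^ 2 * S ≤ S / 9 := by nlinarith
  have hT2 : 0 ≤ ∑' n, ‖a (n + 1)‖ ^ 2 * r ^ (2 * (n + 1)) := tsum_nonneg fun n => by positivity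
  calc bohrSum (8 / 9) a r
      ≤ α + (39 / 200 * S + 25 / 156) + (1 / (1 + α) + 1 / 2) * (S / 9) + 8 / 9 * (S / 9) := by
        unfold bohrSum
        gcongr <;> linarith
    _ ≤ α + (39 / 200 * (1 - α ^ 2) + 25 / 156) + (1 / (1 + α) + 1 / 2) * ((1 - α ^ 2) / 9)
          + 8 / 9 * ((1 - α ^ 2) / 9) := by gcongr <;> linarith
    _ = α + 39 / 200 * (1 - α ^ 2) + 25 / 156 + (1 - α) / 9 + (1 - α ^ 2) / 18
          + 8 / 81 * (1 - α ^ 2) := by field_simp; ring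
    _ ≤ 1 := by nlinarith

noncomputable def blaschke (p : ℝ) (z : ℂ) : ℂ := (p - z) / (1 - p * z)

noncomputable def blaschkeCoeff (p : ℝ) : ℕ → ℂ
  | 0 => p
  | n + 1 => -((1 - p ^ 2) * p ^ n : ℝ)

theorem hasSum_blaschkeCoeff_mul_pow {p : ℝ} (hp : |p| ≤ 1) {z : ℂ} (hz : z ∈ ball (0 : ℂ) 1) :
    HasSum (fun n => blaschkeCoeff p n * z ^ n) (blaschke p z) := by
  rw [mem_ball_zero_iff] at hz
  have hpz : ‖(p : ℂ) * z‖ < 1 := by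
    rw [norm_mul, Complex.norm_real, Real.norm_eq_abs]
    nlinarith [abs_nonneg p, norm_nonneg z]
  have hne : 1 - (p : ℂ) * z ≠ 0 := by
    rw [sub_ne_zero]; rintro h; rw [← h, norm_one] at hpz; exact lt_irrefl _ hpz
  have hterm (n : ℕ) : blaschkeCoeff p (n + 1) * z ^ (n + 1)
      = -((1 - (p : ℂ) ^ 2) * z) * ((p : ℂ) * z) ^ n := by
    simp only [blaschkeCoeff]; push_cast; ring
  have htail : HasSum (fun n => blaschkeCoeff p (n + 1) * z ^ (n + 1))
      (-((1 - (p : ℂ) ^ 2) * z) * (1 - (p : ℂ) * z)⁻¹) := by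
    simpa only [hterm] using (hasSum_geometric_of_norm_lt_one hpz).mul_left _
  have hval : blaschke p z
      = blaschkeCoeff p 0 * z ^ 0 + -((1 - (p : ℂ) ^ 2) * z) * (1 - (p : ℂ) * z)⁻¹ := by
    rw [blaschke, blaschkeCoeff]
    field_simp
    ring
  rw [hval]
  exact HasSum.zero_add htail

theorem norm_blaschke_le_one {p : ℝ} (hp : |p| ≤ 1) {z : ℂ} (hz : z ∈ ball (0 : ℂ) 1) :
    ‖blaschke p z‖ ≤ 1 := by
  rw [mem_ball_zero_iff] at hz
  have hp2 : p ^ 2 ≤ 1 := by nlinarith [sq_abs p, abs_nonneg p]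
  have hz2 : z.re ^ 2 + z.im ^ 2 < 1 := by
    have := Complex.sq_norm z
    rw [Complex.normSq_apply] at this
    nlinarith [norm_nonneg z]
  -- `|1 - p z|² - |p - z|² = (1 - p²)(1 - |z|²)`
  have hle : ‖(p : ℂ) - z‖ ≤ ‖1 - (p : ℂ) * z‖ := by
    rw [Complex.norm_def, Complex.norm_def]
    apply Real.sqrt_le_sqrt
    simp only [Complex.normSq_apply, Complex.sub_re, Complex.sub_im, Complex.mul_re,
      Complex.mul_im, Complex.one_re, Complex.one_im, Complex.ofReal_re, Complex.ofReal_im]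
    nlinarith [mul_nonneg (sub_nonneg.2 hp2) (sub_nonneg.2 hz2.le)]
  rw [blaschke, norm_div]
  exact div_le_one_of_le₀ hle (norm_nonneg _)

theorem bohrSum_blaschkeCoeff (lam : ℝ) {p r : ℝ} (hp0 : 0 ≤ p) (hp1 : p ≤ 1) (hr0 : 0 ≤ r)
    (hr1 : r < 1) :
    bohrSum lam (blaschkeCoeff p) r
      = p + (1 - p ^ 2) * r / (1 - p * r)
        + (1 / (1 + p) + r / (1 - r)) * ((1 - p ^ 2) ^ 2 * r ^ 2 / (1 - p ^ 2 * r ^ 2))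
        + lam * ((1 - p ^ 2) ^ 2 * r ^ 2 / (1 - p ^ 2 * r ^ 2) ^ 2) := by
  have hp2 : 0 ≤ 1 - p ^ 2 := by nlinarith
  have hnorm (n : ℕ) : ‖blaschkeCoeff p (n + 1)‖ = (1 - p ^ 2) * p ^ n := by
    rw [blaschkeCoeff, norm_neg, Complex.norm_of_nonneg (by positivity)]
  have hpr : p * r < 1 := by nlinarith
  have hpr2 : p ^ 2 * r ^ 2 < 1 := by nlinarith [mul_nonneg hp0 hr0]
  have hnorm0 : ‖blaschkeCoeff p 0‖ = p := Complex.norm_of_nonneg hp0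
  have h1 : ∑' n, ‖blaschkeCoeff p (n + 1)‖ * r ^ (n + 1) = (1 - p ^ 2) * r / (1 - p * r) := by
    simp_rw [hnorm, show ∀ n : ℕ, (1 - p ^ 2) * p ^ n * r ^ (n + 1)
      = (1 - p ^ 2) * r * (p * r) ^ n from fun n => by ring]
    rw [tsum_mul_left, tsum_geometric_of_lt_one (by positivity) hpr, div_eq_mul_inv]
  have h2 : ∑' n, ‖blaschkeCoeff p (n + 1)‖ ^ 2 * r ^ (2 * (n + 1))
      = (1 - p ^ 2) ^ 2 * r ^ 2 / (1 - p ^ 2 * r ^ 2) := by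
    simp_rw [hnorm, show ∀ n : ℕ, ((1 - p ^ 2) * p ^ n) ^ 2 * r ^ (2 * (n + 1))
      = (1 - p ^ 2) ^ 2 * r ^ 2 * (p ^ 2 * r ^ 2) ^ n from fun n => by ring]
    rw [tsum_mul_left, tsum_geometric_of_lt_one (by positivity) hpr2, div_eq_mul_inv]
  have h3 : ∑' n : ℕ, ((n : ℝ) + 1) * ‖blaschkeCoeff p (n + 1)‖ ^ 2 * r ^ (2 * (n + 1))
      = (1 - p ^ 2) ^ 2 * r ^ 2 / (1 - p ^ 2 * r ^ 2) ^ 2 := by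
    have h := tsum_choose_mul_geometric_of_norm_lt_one 1
      (by rwa [Real.norm_of_nonneg (by positivity)] : ‖p ^ 2 * r ^ 2‖ < 1)
    simp only [Nat.choose_one_right, Nat.cast_add, Nat.cast_one] at h
    simp_rw [hnorm, show ∀ n : ℕ, ((n : ℝ) + 1) * ((1 - p ^ 2) * p ^ n) ^ 2 * r ^ (2 * (n + 1))
      = (1 - p ^ 2) ^ 2 * r ^ 2 * (((n : ℝ) + 1) * (p ^ 2 * r ^ 2) ^ n) from fun n => by ring]
    rw [tsum_mul_left, h, mul_one_div]
  rw [bohrSum, hnorm0, h1, h2, h3]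

theorem exists_one_lt_bohrSum_blaschkeCoeff_of_one_third_lt {lam r : ℝ} (hlam : 0 ≤ lam)
    (hr : 1 / 3 < r) (hr1 : r < 1) :
    ∃ p, 0 ≤ p ∧ p ≤ 1 ∧ 1 < bohrSum lam (blaschkeCoeff p) r := by
  have hr0 : 0 < r := by linarith
  set p := (1 + r) / (4 * r) with hp
  have hp0 : 0 ≤ p := by positivity
  have hp1 : p < 1 := by rw [hp, div_lt_one (by linarith)]; linarith
  have hpr : p * r = (1 + r) / 4 := by rw [hp]; field_simp
  refine ⟨p, hp0, hp1.le, ?_⟩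
  rw [bohrSum_blaschkeCoeff lam hp0 hp1.le hr0.le hr1]
  have hmain : 1 < p + (1 - p ^ 2) * r / (1 - p * r) := by
    have hid : p + (1 - p ^ 2) * r / (1 - p * r) - 1
        = (1 - p) * (r + 2 * (p * r) - 1) / (1 - p * r) := by
      field_simp [show 1 - p * r ≠ 0 by rw [hpr]; linarith]
      ring
    have : 0 < (1 - p) * (r + 2 * (p * r) - 1) / (1 - p * r) := by
      rw [hpr]; apply div_pos (mul_pos (by linarith) (by linarith)) (by linarith)
    linarith
  have hK : 0 ≤ 1 / (1 + p) + r / (1 - r) :=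
    add_nonneg (by positivity) (div_nonneg hr0.le (by linarith))
  have hB : 0 ≤ (1 - p ^ 2) ^ 2 * r ^ 2 / (1 - p ^ 2 * r ^ 2) :=
    div_nonneg (by positivity) (by nlinarith)
  have hC : 0 ≤ (1 - p ^ 2) ^ 2 * r ^ 2 / (1 - p ^ 2 * r ^ 2) ^ 2 := by positivity
  nlinarith [mul_nonneg hK hB, mul_nonneg hlam hC]

theorem exists_one_lt_bohrSum_blaschkeCoeff_of_eight_ninths_lt {lam : ℝ} (hlam : 8 / 9 < lam) :
    ∃ p, 0 ≤ p ∧ p ≤ 1 ∧ 1 < bohrSum lam (blaschkeCoeff p) (1 / 3) := by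
  have hev : ∀ᶠ p in 𝓝[<] (1 : ℝ), 0 < 18 * lam * (1 + p) ^ 2 - (9 - p ^ 2) ^ 2 :=
    (((by fun_prop : Continuous fun p : ℝ => 18 * lam * (1 + p) ^ 2 - (9 - p ^ 2) ^ 2).tendsto 1
      ).mono_left nhdsWithin_le_nhds).eventually_const_lt (by linarith)
  obtain ⟨p, hpos, hp0, hp1⟩ := (hev.and (Ioo_mem_nhdsLT zero_lt_one)).exists
  refine ⟨p, hp0.le, hp1.le, ?_⟩
  rw [bohrSum_blaschkeCoeff lam hp0.le hp1.le (by norm_num) (by norm_num)]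
  have h9 : 0 < 9 - p ^ 2 := by nlinarith
  have hid : p + (1 - p ^ 2) * (1 / 3) / (1 - p * (1 / 3))
      + (1 / (1 + p) + 1 / 3 / (1 - 1 / 3))
        * ((1 - p ^ 2) ^ 2 * (1 / 3) ^ 2 / (1 - p ^ 2 * (1 / 3) ^ 2))
      + lam * ((1 - p ^ 2) ^ 2 * (1 / 3) ^ 2 / (1 - p ^ 2 * (1 / 3) ^ 2) ^ 2) - 1
      = (1 - p) ^ 2 * (18 * lam * (1 + p) ^ 2 - (9 - p ^ 2) ^ 2) / (2 * (9 - p ^ 2) ^ 2) := by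
    have h1 : 3 - p ≠ 0 := by linarith
    have h2 : (3 : ℝ) ^ 2 - p ^ 2 ≠ 0 := by linarith
    field_simp
    ring
  have : 0 < (1 - p) ^ 2 * (18 * lam * (1 + p) ^ 2 - (9 - p ^ 2) ^ 2) / (2 * (9 - p ^ 2) ^ 2) :=
    div_pos (mul_pos (pow_pos (by linarith) 2) hpos) (by positivity)
  linarith

theorem exists_one_lt_bohrSum_of_blaschkeCoeff {lam r p : ℝ} (hr0 : 0 ≤ r) (hp0 : 0 ≤ p)
    (hp1 : p ≤ 1) (h : 1 < bohrSum lam (blaschkeCoeff p) r) :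
    ∃ (f : ℂ → ℂ) (a : ℕ → ℂ) (z : ℂ),
      (∀ w ∈ ball (0 : ℂ) 1, HasSum (fun n => a n * w ^ n) (f w)) ∧
      (∀ w ∈ ball (0 : ℂ) 1, ‖f w‖ ≤ 1) ∧ ‖z‖ = r ∧ 1 < bohrSum lam a ‖z‖ := by
  have hp : |p| ≤ 1 := abs_le.2 ⟨by linarith, hp1⟩
  refine ⟨blaschke p, blaschkeCoeff p, r, fun w => hasSum_blaschkeCoeff_mul_pow hp,
    fun w => norm_blaschke_le_one hp, Complex.norm_of_nonneg hr0, ?_⟩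
  rwa [Complex.norm_of_nonneg hr0]

theorem improved_refined_bohr_lambda_eight_ninths :
    (∀ (f : ℂ → ℂ) (a : ℕ → ℂ),
      (∀ z ∈ Metric.ball (0:ℂ) 1, HasSum (fun n => a n * z ^ n) (f z)) →
      (∀ z ∈ Metric.ball (0:ℂ) 1, ‖f z‖ ≤ 1) →
      ‖a 0‖ ≤ 0.402964 →
      ∀ z : ℂ, ‖z‖ ≤ 1/3 →
        ‖a 0‖
          + (∑' n : ℕ, ‖a (n+1)‖ * ‖z‖ ^ (n+1))
          + (1 / (1 + ‖a 0‖) + ‖z‖ / (1 - ‖z‖))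
              * (∑' n : ℕ, ‖a (n+1)‖ ^ 2 * ‖z‖ ^ (2*(n+1)))
          + (8/9) * (∑' n : ℕ, ((n:ℝ)+1) * ‖a (n+1)‖ ^ 2
                        * ‖z‖ ^ (2*(n+1))) ≤ 1)
    ∧
    -- sharpness of the radius 1/3
    (∀ r : ℝ, 1/3 < r → r < 1 →
      ∃ (f : ℂ → ℂ) (a : ℕ → ℂ) (z : ℂ),
        (∀ w ∈ Metric.ball (0:ℂ) 1, HasSum (fun n => a n * w ^ n) (f w)) ∧
        (∀ w ∈ Metric.ball (0:ℂ) 1, ‖f w‖ ≤ 1) ∧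
        ‖z‖ = r ∧
        1 < ‖a 0‖
          + (∑' n : ℕ, ‖a (n+1)‖ * ‖z‖ ^ (n+1))
          + (1 / (1 + ‖a 0‖) + ‖z‖ / (1 - ‖z‖))
              * (∑' n : ℕ, ‖a (n+1)‖ ^ 2 * ‖z‖ ^ (2*(n+1)))
          + (8/9) * (∑' n : ℕ, ((n:ℝ)+1) * ‖a (n+1)‖ ^ 2
                        * ‖z‖ ^ (2*(n+1))))
    ∧
    -- sharpness of the constant 8/9
    (∀ lam : ℝ, 8/9 < lam →
      ∃ (f : ℂ → ℂ) (a : ℕ → ℂ) (z : ℂ),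
        (∀ w ∈ Metric.ball (0:ℂ) 1, HasSum (fun n => a n * w ^ n) (f w)) ∧
        (∀ w ∈ Metric.ball (0:ℂ) 1, ‖f w‖ ≤ 1) ∧
        ‖z‖ = 1/3 ∧
        1 < ‖a 0‖
          + (∑' n : ℕ, ‖a (n+1)‖ * ‖z‖ ^ (n+1))
          + (1 / (1 + ‖a 0‖) + ‖z‖ / (1 - ‖z‖))
              * (∑' n : ℕ, ‖a (n+1)‖ ^ 2 * ‖z‖ ^ (2*(n+1)))
          + lam * (∑' n : ℕ, ((n:ℝ)+1) * ‖a (n+1)‖ ^ 2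
                        * ‖z‖ ^ (2*(n+1)))) := by
  refine ⟨fun f a hs hb ha z hz => ?_, fun r hr hr1 => ?_, fun lam hlam => ?_⟩
  · have hsq := sum_range_norm_sq_le_one hs hb
    have hsum : Summable fun n => ‖a n‖ ^ 2 := summable_of_sum_range_le (fun n => sq_nonneg _) hsq
    have hle : ‖a 0‖ ^ 2 + ∑' n, ‖a (n + 1)‖ ^ 2 ≤ 1 := by
      rw [← hsum.tsum_eq_zero_add]
      exact Real.tsum_le_of_sum_range_le (fun n => sq_nonneg _) hsq
    exact bohrSum_le_one ((summable_nat_add_iff 1).2 hsum) hle ha (norm_nonneg z) hz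
  · obtain ⟨p, hp0, hp1, h⟩ :=
      exists_one_lt_bohrSum_blaschkeCoeff_of_one_third_lt (lam := 8 / 9) (by norm_num) hr hr1
    exact exists_one_lt_bohrSum_of_blaschkeCoeff (by linarith) hp0 hp1 h
  · obtain ⟨p, hp0, hp1, h⟩ := exists_one_lt_bohrSum_blaschkeCoeff_of_eight_ninths_lt hlam
    exact exists_one_lt_bohrSum_of_blaschkeCoeff (by norm_num) hp0 hp1 h
end
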